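/- arXiv:1802.09224 — 3 statements merged into one kernel-verified Lean document; each statement's English description precedes it below -/
import Mathlib

section
/- (Hölder-continuous observation families.) Suppose each U(t,0) is an isometry on H, the observation family satisfies the Hölder estimate ‖C(t)v − C(s)v‖_Y ≤ L₀·|t−s|^α·‖ι v‖_H for all s, t ∈ [0,τ], v ∈ D and some constants L₀ > 0, α > 0, and the double-averaged observability estimate κ·‖ι x‖²_H ≤ ∫₀^τ∫₀^τ ‖C(s)(Ũ(t,0)x)‖²_Y ds dt holds for all x ∈ D with κ > 0. Then for all x ∈ D: κ·‖ι x‖²_H ≤ (2·L₀²·τ^(2α+2)/((2α+1)(α+1)))·‖ι x‖²_H + 2τ·∫₀^τ ‖C(t)(Ũ(t,0)x)‖²_Y dt. In particular, if 2·L₀²·τ^(2α+2)/((2α+1)(α+1)) < κ, then the system is exactly averaged observable in time τ. -/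
/-!
Write `v t = Ũ(t,0) x`. Since `U(t,0)` is an isometry, `‖ι (v t)‖ = ‖ι x‖`, so the Hölder estimate
gives `|‖C(s) (v t)‖ - ‖C(t) (v t)‖| ≤ L₀ ‖ι x‖ |t - s|^α`. Squaring with `(p + q)² ≤ 2p² + 2q²` and
integrating over `[0,τ]²`, where `∫∫ |t - s|^(2α) = τ^(2α+2) / ((2α+1)(α+1))`, bounds the double
average by the diagonal one.

The delicate point is that `t ↦ ‖C(t) (v t)‖²` is measurable although only `t ↦ ι (v t)` is known
to be continuous. Pairing with the dense range of `ι†` shows that `v` is weakly measurable, and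
weakly continuous on each set where it is bounded; hence its range is separable, and in a Hilbert
space the norm of a weakly measurable function with separable range is measurable.
-/

open MeasureTheory Set Filter Topology TopologicalSpace
open scoped InnerProductSpace InnerProduct

theorem sq_le_two_mul_sq_add_two_mul_sq_of_abs_sub_le {x y e : ℝ} (h : |x - y| ≤ e) :
    x ^ 2 ≤ 2 * y ^ 2 + 2 * e ^ 2 := by
  have hsq := sq_le_sq' (abs_le.1 h).1 (abs_le.1 h).2
  nlinarith [sq_nonneg (x - 2 * y)]

theorem continuous_abs_sub_rpow {β : ℝ} (hβ : 0 ≤ β) (t : ℝ) :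
    Continuous fun s : ℝ => |t - s| ^ β :=
  (continuous_const.sub continuous_id).abs.rpow_const fun _ => Or.inr hβ

theorem integral_abs_sub_rpow {a b t β : ℝ} (hβ : 0 ≤ β) (ht : t ∈ Icc a b) :
    ∫ s in a..b, |t - s| ^ β = ((t - a) ^ (β + 1) + (b - t) ^ (β + 1)) / (β + 1) := by
  have hβ' : β + 1 ≠ 0 := by positivity
  have hleft : ∫ s in a..t, |t - s| ^ β = (t - a) ^ (β + 1) / (β + 1) := by
    rw [intervalIntegral.integral_congr (g := fun s => (t - s) ^ β) fun s hs => by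
        rw [uIcc_of_le ht.1] at hs; simp only [abs_of_nonneg (sub_nonneg.2 hs.2)],
      intervalIntegral.integral_comp_sub_left (fun s => s ^ β), sub_self,
      integral_rpow (Or.inl (by linarith)), Real.zero_rpow hβ', sub_zero]
  have hright : ∫ s in t..b, |t - s| ^ β = (b - t) ^ (β + 1) / (β + 1) := by
    rw [intervalIntegral.integral_congr (g := fun s => (s - t) ^ β) fun s hs => by
        rw [uIcc_of_le ht.2] at hs; simp only [abs_sub_comm t s, abs_of_nonneg (sub_nonneg.2 hs.1)],
      intervalIntegral.integral_comp_sub_right (fun s => s ^ β), sub_self,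
      integral_rpow (Or.inl (by linarith)), Real.zero_rpow hβ', sub_zero]
  rw [← intervalIntegral.integral_add_adjacent_intervals
    ((continuous_abs_sub_rpow hβ t).intervalIntegrable a t)
    ((continuous_abs_sub_rpow hβ t).intervalIntegrable t b), hleft, hright, add_div]

theorem integral_integral_abs_sub_rpow {a b β : ℝ} (hβ : 0 ≤ β) (hab : a ≤ b) :
    ∫ t in a..b, ∫ s in a..b, |t - s| ^ β = 2 * (b - a) ^ (β + 2) / ((β + 1) * (β + 2)) := by
  have hβ1 : -1 < β + 1 := by linarith
  have hpow : Continuous fun x : ℝ => x ^ (β + 1) :=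
    continuous_id.rpow_const fun _ => Or.inr (by linarith)
  have h1 : ∫ t in a..b, (t - a) ^ (β + 1) = (b - a) ^ (β + 2) / (β + 2) := by
    rw [intervalIntegral.integral_comp_sub_right (fun x => x ^ (β + 1)), sub_self,
      integral_rpow (Or.inl hβ1), Real.zero_rpow (by positivity), sub_zero]
    ring_nf
  have h2 : ∫ t in a..b, (b - t) ^ (β + 1) = (b - a) ^ (β + 2) / (β + 2) := by
    rw [intervalIntegral.integral_comp_sub_left (fun x => x ^ (β + 1)), sub_self,
      integral_rpow (Or.inl hβ1), Real.zero_rpow (by positivity), sub_zero]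
    ring_nf
  have hi1 : IntervalIntegrable (fun t => (t - a) ^ (β + 1)) volume a b :=
    (hpow.comp (continuous_id.sub continuous_const)).intervalIntegrable a b
  have hi2 : IntervalIntegrable (fun t => (b - t) ^ (β + 1)) volume a b :=
    (hpow.comp (continuous_const.sub continuous_id)).intervalIntegrable a b
  rw [intervalIntegral.integral_congr fun t ht => integral_abs_sub_rpow hβ (uIcc_of_le hab ▸ ht),
    intervalIntegral.integral_div, intervalIntegral.integral_add hi1 hi2, h1, h2]
  field_simp
  ring

theorem integral_sq_le_of_abs_sub_le {a b : ℝ} (hab : a ≤ b) {f h e : ℝ → ℝ}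
    (hf : ContinuousOn f (Icc a b)) (hh : ContinuousOn h (Icc a b)) (he : ContinuousOn e (Icc a b))
    (hle : ∀ s ∈ Icc a b, |f s - h s| ≤ e s) :
    ∫ s in a..b, f s ^ 2 ≤ 2 * (∫ s in a..b, h s ^ 2) + 2 * ∫ s in a..b, e s ^ 2 := by
  have hint {u : ℝ → ℝ} (hu : ContinuousOn u (Icc a b)) :
      IntervalIntegrable (fun s => u s ^ 2) volume a b :=
    (hu.pow 2).intervalIntegrable_of_Icc hab
  rw [← intervalIntegral.integral_const_mul, ← intervalIntegral.integral_const_mul,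
    ← intervalIntegral.integral_add ((hint hh).const_mul 2) ((hint he).const_mul 2)]
  exact intervalIntegral.integral_mono_on hab (hint hf)
    (((hint hh).const_mul 2).add ((hint he).const_mul 2))
    fun s hs => sq_le_two_mul_sq_add_two_mul_sq_of_abs_sub_le (hle s hs)

theorem integral_mul_abs_sub_rpow_sq (a b c t α : ℝ) :
    ∫ s in a..b, (c * |t - s| ^ α) ^ 2 = c ^ 2 * ∫ s in a..b, |t - s| ^ (2 * α) := by
  rw [← intervalIntegral.integral_const_mul]
  refine intervalIntegral.integral_congr fun s _ => ?_
  rw [mul_pow, ← Real.rpow_mul_natCast (abs_nonneg _)]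
  push_cast
  ring_nf

theorem continuous_integral_abs_sub_rpow {β : ℝ} (hβ : 0 ≤ β) (a b : ℝ) :
    Continuous fun t => ∫ s in a..b, |t - s| ^ β :=
  intervalIntegral.continuous_parametric_intervalIntegral_of_continuous'
    ((continuous_abs.comp continuous_sub).rpow_const fun _ => Or.inr hβ) a b

theorem intervalIntegrable_sq_diag_of_abs_sub_le {a b c α : ℝ} (hab : a < b) (hα : 0 ≤ α)
    {g : ℝ → ℝ → ℝ}
    (hg : ∀ t ∈ Icc a b, ∀ s ∈ Icc a b, |g t s - g t t| ≤ c * |t - s| ^ α)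
    (hcont : ∀ t ∈ Icc a b, ContinuousOn (g t) (Icc a b))
    (hmeas : AEStronglyMeasurable (fun t => g t t ^ 2) (volume.restrict (Icc a b)))
    (hG : IntervalIntegrable (fun t => ∫ s in a..b, g t s ^ 2) volume a b) :
    IntervalIntegrable (fun t => g t t ^ 2) volume a b := by
  set k : ℝ → ℝ := fun t => ∫ s in a..b, |t - s| ^ (2 * α)
  have hk : IntervalIntegrable k volume a b :=
    (continuous_integral_abs_sub_rpow (by positivity) a b).intervalIntegrable a b
  have hdiag_le (t : ℝ) (ht : t ∈ Icc a b) :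
      (b - a) * g t t ^ 2 ≤ 2 * (∫ s in a..b, g t s ^ 2) + 2 * (c ^ 2 * k t) := by
    simpa only [intervalIntegral.integral_const, smul_eq_mul, integral_mul_abs_sub_rpow_sq] using
      integral_sq_le_of_abs_sub_le hab.le continuousOn_const (hcont t ht)
        ((continuous_abs_sub_rpow hα t).const_mul c).continuousOn
        fun s hs => abs_sub_comm (g t t) (g t s) ▸ hg t ht s hs
  rw [intervalIntegrable_iff_integrableOn_Ioc_of_le hab.le]
  refine Integrable.mono'
    (((hG.const_mul 2).add ((hk.const_mul (c ^ 2)).const_mul 2)).div_const (b - a)).1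
    (hmeas.mono_measure (Measure.restrict_mono Ioc_subset_Icc_self le_rfl))
    (ae_restrict_of_forall_mem measurableSet_Ioc fun t ht => ?_)
  rw [Real.norm_eq_abs, abs_of_nonneg (sq_nonneg _), le_div_iff₀ (sub_pos.2 hab), mul_comm]
  exact hdiag_le t (Ioc_subset_Icc_self ht)

theorem integral_integral_sq_le_of_abs_sub_le {a b c α : ℝ} (hab : a < b) (hα : 0 ≤ α)
    {g : ℝ → ℝ → ℝ}
    (hg : ∀ t ∈ Icc a b, ∀ s ∈ Icc a b, |g t s - g t t| ≤ c * |t - s| ^ α)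
    (hcont : ∀ t ∈ Icc a b, ContinuousOn (g t) (Icc a b))
    (hmeas : AEStronglyMeasurable (fun t => g t t ^ 2) (volume.restrict (Icc a b))) :
    ∫ t in a..b, ∫ s in a..b, g t s ^ 2 ≤
      2 * c ^ 2 * (∫ t in a..b, ∫ s in a..b, |t - s| ^ (2 * α))
        + 2 * (b - a) * ∫ t in a..b, g t t ^ 2 := by
  set k : ℝ → ℝ := fun t => ∫ s in a..b, |t - s| ^ (2 * α)
  have hk : IntervalIntegrable k volume a b :=
    (continuous_integral_abs_sub_rpow (by positivity) a b).intervalIntegrable a b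
  by_cases hG : IntervalIntegrable (fun t => ∫ s in a..b, g t s ^ 2) volume a b
  swap
  · -- the left-hand side is the junk value `0`
    rw [intervalIntegral.integral_undef hG]
    have hk0 : 0 ≤ ∫ t in a..b, k t := intervalIntegral.integral_nonneg hab.le fun t _ =>
      intervalIntegral.integral_nonneg hab.le fun s _ => by positivity
    have hdiag0 : 0 ≤ ∫ t in a..b, g t t ^ 2 :=
      intervalIntegral.integral_nonneg hab.le fun t _ => sq_nonneg _
    exact add_nonneg (mul_nonneg (by positivity) hk0) (mul_nonneg (by linarith) hdiag0)
  have hdiag := intervalIntegrable_sq_diag_of_abs_sub_le hab hα hg hcont hmeas hG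
  have hrow_le (t : ℝ) (ht : t ∈ Icc a b) :
      ∫ s in a..b, g t s ^ 2 ≤ 2 * ((b - a) * g t t ^ 2) + 2 * (c ^ 2 * k t) := by
    simpa only [intervalIntegral.integral_const, smul_eq_mul, integral_mul_abs_sub_rpow_sq] using
      integral_sq_le_of_abs_sub_le hab.le (hcont t ht) continuousOn_const
        ((continuous_abs_sub_rpow hα t).const_mul c).continuousOn (hg t ht)
  calc ∫ t in a..b, ∫ s in a..b, g t s ^ 2
      ≤ ∫ t in a..b, (2 * ((b - a) * g t t ^ 2) + 2 * (c ^ 2 * k t)) :=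
        intervalIntegral.integral_mono_on hab.le hG
          (((hdiag.const_mul _).const_mul 2).add ((hk.const_mul _).const_mul 2)) hrow_le
    _ = _ := by
        rw [intervalIntegral.integral_add ((hdiag.const_mul _).const_mul 2)
          ((hk.const_mul _).const_mul 2)]
        simp only [intervalIntegral.integral_const_mul]
        ring

section WeakMeasurability

variable {𝕜 E : Type*} [RCLike 𝕜] [NormedAddCommGroup E] [InnerProductSpace 𝕜 E]

theorem norm_sq_eq_iSup_of_mem_closure {S : Set E} {y : E} (hy : y ∈ closure S) :
    ‖y‖ ^ 2 = ⨆ z : S, (2 * RCLike.re ⟪(z : E), y⟫_𝕜 - ‖(z : E)‖ ^ 2) := by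
  have : Nonempty S := (closure_nonempty_iff.1 ⟨y, hy⟩).to_subtype
  have hz (z : E) : 2 * RCLike.re ⟪z, y⟫_𝕜 - ‖z‖ ^ 2 = ‖y‖ ^ 2 - ‖y - z‖ ^ 2 := by
    rw [@norm_sub_sq 𝕜, inner_re_symm]; ring
  refine (ciSup_eq_of_forall_le_of_forall_lt_exists_gt (fun z => ?_) fun w hw => ?_).symm
  · rw [hz]; exact sub_le_self _ (sq_nonneg _)
  · obtain ⟨z, hzS, hyz⟩ :=
      Metric.mem_closure_iff.1 hy _ (Real.sqrt_pos.2 (sub_pos.2 hw))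
    rw [dist_eq_norm, Real.lt_sqrt (norm_nonneg _)] at hyz
    exact ⟨⟨z, hzS⟩, by rw [hz]; linarith⟩

theorem measurable_norm_sq_of_measurable_re_inner {α : Type*} [MeasurableSpace α] {f : α → E}
    (hsep : IsSeparable (range f)) (hf : ∀ z, Measurable fun a => RCLike.re ⟪z, f a⟫_𝕜) :
    Measurable fun a => ‖f a‖ ^ 2 := by
  obtain ⟨S, hSc, hS⟩ := hsep
  have := hSc.to_subtype
  simp_rw [fun a => norm_sq_eq_iSup_of_mem_closure (𝕜 := 𝕜) (hS (mem_range_self a))]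
  exact Measurable.iSup fun z => ((hf z).const_mul 2).sub_const _

theorem tendstoUniformlyOn_inner_closedBall {ι : Type*} {l : Filter ι} {F : ι → E} {r : E}
    (h : Tendsto F l (𝓝 r)) (R : ℝ) :
    TendstoUniformlyOn (fun n d => ⟪F n, d⟫_𝕜) (fun d => ⟪r, d⟫_𝕜) l (Metric.closedBall 0 R) := by
  rw [Metric.tendstoUniformlyOn_iff]
  intro ε hε
  have hnorm := (tendsto_iff_norm_sub_tendsto_zero.mp h).mul_const R
  rw [zero_mul] at hnorm
  filter_upwards [hnorm.eventually (gt_mem_nhds hε)] with n hn d hd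
  rw [dist_eq_norm', ← inner_sub_left]
  calc ‖⟪F n - r, d⟫_𝕜‖ ≤ ‖F n - r‖ * ‖d‖ := norm_inner_le_norm _ _
    _ ≤ ‖F n - r‖ * R := by gcongr; exact mem_closedBall_zero_iff.1 hd
    _ < ε := hn

end WeakMeasurability

section DenseInjection

variable {𝕜 E F : Type*} [RCLike 𝕜] [NormedAddCommGroup E] [InnerProductSpace 𝕜 E] [CompleteSpace E]
  [NormedAddCommGroup F] [InnerProductSpace 𝕜 F] [CompleteSpace F] {ι : E →L[𝕜] F}

theorem denseRange_adjoint_of_injective (hι : Function.Injective ι) : DenseRange (ι†) := by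
  have h : (LinearMap.range (ι† : F →ₗ[𝕜] E))ᗮ = ⊥ := by
    rw [ContinuousLinearMap.orthogonal_range, ContinuousLinearMap.adjoint_adjoint]
    exact LinearMap.ker_eq_bot.2 hι
  rw [DenseRange, ← ContinuousLinearMap.coe_coe, ← LinearMap.coe_range,
    Submodule.dense_iff_topologicalClosure_eq_top,
    ← Submodule.orthogonal_orthogonal_eq_closure, h, Submodule.bot_orthogonal_eq_top]

theorem exists_tendsto_adjoint_apply (hι : Function.Injective ι) (r : E) :
    ∃ h : ℕ → F, Tendsto (fun k => (ι†) (h k)) atTop (𝓝 r) := by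
  have hr : r ∈ closure (range (ι†)) := (denseRange_adjoint_of_injective hι).closure_eq ▸ mem_univ r
  obtain ⟨y, hy, hyr⟩ := mem_closure_iff_seq_limit.1 hr
  choose h hh using hy
  exact ⟨h, by simpa only [hh] using hyr⟩

variable {X : Type*} [TopologicalSpace X] {V : X → E}

theorem measurable_inner_of_continuous_comp [MeasurableSpace X] [OpensMeasurableSpace X]
    (hι : Function.Injective ι) (hV : Continuous (ι ∘ V)) (r : E) :
    Measurable fun x => ⟪r, V x⟫_𝕜 := by
  obtain ⟨h, hh⟩ := exists_tendsto_adjoint_apply hι r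
  refine measurable_of_tendsto_metrizable (f := fun k x => ⟪h k, ι (V x)⟫_𝕜)
    (fun k => (continuous_const.inner hV).measurable) (tendsto_pi_nhds.2 fun x => ?_)
  simpa only [ContinuousLinearMap.adjoint_inner_left] using hh.inner (𝕜 := 𝕜) tendsto_const_nhds

theorem continuousOn_inner_of_continuous_comp (hι : Function.Injective ι)
    (hV : Continuous (ι ∘ V)) (r : E) (R : ℝ) :
    ContinuousOn (fun x => ⟪r, V x⟫_𝕜) {x | ‖V x‖ ≤ R} := by
  obtain ⟨h, hh⟩ := exists_tendsto_adjoint_apply hι r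
  have hR : V ⁻¹' Metric.closedBall 0 R = {x | ‖V x‖ ≤ R} := by
    ext x; simp
  rw [← hR]
  refine ((tendstoUniformlyOn_inner_closedBall hh R).comp V).continuousOn
    (Frequently.of_forall fun k => ?_)
  simpa only [Function.comp_def, ContinuousLinearMap.adjoint_inner_left] using
    ((continuous_const (y := h k)).inner (𝕜 := 𝕜) hV).continuousOn

theorem isSeparable_range_of_continuous_comp [PseudoMetrizableSpace X] [SeparableSpace X]
    (hι : Function.Injective ι) (hV : Continuous (ι ∘ V)) : IsSeparable (range V) := by
  choose Q hQs hQc hQd using fun n : ℕ =>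
    (IsSeparable.of_separableSpace {x | ‖V x‖ ≤ n}).exists_countable_dense_subset
  refine ((countable_iUnion fun n => (hQc n).image V).isSeparable.span (R := 𝕜)).closure.mono ?_
  rintro _ ⟨x, rfl⟩
  obtain ⟨n, hn⟩ := exists_nat_ge ‖V x‖
  rw [← Submodule.topologicalClosure_coe, ← Submodule.orthogonal_orthogonal_eq_closure,
    SetLike.mem_coe, Submodule.mem_orthogonal]
  intro r hr
  have hQ : EqOn (fun y => ⟪r, V y⟫_𝕜) 0 (Q n) := fun q hq =>
    Submodule.inner_left_of_mem_orthogonal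
      (Submodule.subset_span (mem_iUnion.2 ⟨n, mem_image_of_mem V hq⟩)) hr
  exact hQ.of_subset_closure (continuousOn_inner_of_continuous_comp hι hV r n) continuousOn_const
    (hQs n) (hQd n) hn

end DenseInjection

section HolderFamily

variable {𝕜 D H Y : Type*} [RCLike 𝕜]
  [NormedAddCommGroup D] [NormedSpace 𝕜 D] [NormedAddCommGroup H] [NormedSpace 𝕜 H]
  [NormedAddCommGroup Y] [NormedSpace 𝕜 Y]
  {ι : D →L[𝕜] H} {C : ℝ → D →L[𝕜] Y} {I : Set ℝ} {L α : ℝ}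

theorem continuousOn_apply_sub_apply_of_holder (hα : 0 < α)
    (hC : ∀ s ∈ I, ∀ t ∈ I, ∀ v : D, ‖C t v - C s v‖ ≤ L * |t - s| ^ α * ‖ι v‖)
    {c : ℝ} (hc : c ∈ I) {u : ℝ → D} (hu : ContinuousOn (fun t => ι (u t)) I) :
    ContinuousOn (fun t => C t (u t) - C c (u t)) I := by
  intro t ht
  set b : ℝ → ℝ := fun t' => L * |t' - t| ^ α * ‖ι (u t)‖ + L * |t' - c| ^ α * ‖ι (u t') - ι (u t)‖
  have hpow : ∀ a : ℝ, Continuous fun t' : ℝ => |t' - a| ^ α := fun a =>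
    (continuous_id.sub continuous_const).abs.rpow_const fun _ => Or.inr hα.le
  have hb : ContinuousWithinAt b I t :=
    (((hpow t).const_mul L).mul_const _).continuousWithinAt.add
      (((hpow c).const_mul L).continuousWithinAt.mul ((hu t ht).sub continuousWithinAt_const).norm)
  have hbt : b t = 0 := by simp [b, Real.zero_rpow hα.ne']
  rw [ContinuousWithinAt, tendsto_iff_norm_sub_tendsto_zero]
  refine squeeze_zero' (Eventually.of_forall fun _ => norm_nonneg _)
    (eventually_nhdsWithin_of_forall fun t' ht' => ?_) (hbt ▸ hb.tendsto)
  have hsplit : C t' (u t') - C c (u t') - (C t (u t) - C c (u t)) =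
      (C t' (u t) - C t (u t)) + (C t' (u t' - u t) - C c (u t' - u t)) := by
    simp only [map_sub]; abel
  rw [hsplit]
  refine (norm_add_le _ _).trans (add_le_add (hC t ht t' ht' _) ?_)
  simpa only [map_sub] using hC c hc t' ht' (u t' - u t)

theorem continuousOn_apply_of_holder (hα : 0 < α)
    (hC : ∀ s ∈ I, ∀ t ∈ I, ∀ v : D, ‖C t v - C s v‖ ≤ L * |t - s| ^ α * ‖ι v‖)
    (v : D) : ContinuousOn (fun t => C t v) I := fun t ht => by
  have h := (continuousOn_apply_sub_apply_of_holder hα hC ht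
    (continuousOn_const (c := ι v)) t ht).add (continuousWithinAt_const (b := C t v))
  simpa only [Pi.add_def, sub_add_cancel] using h

end HolderFamily

theorem aestronglyMeasurable_norm_sq_apply_of_holder
    {𝕜 D H Y : Type*} [RCLike 𝕜]
    [NormedAddCommGroup D] [InnerProductSpace 𝕜 D] [CompleteSpace D]
    [NormedAddCommGroup H] [InnerProductSpace 𝕜 H] [CompleteSpace H]
    [NormedAddCommGroup Y] [InnerProductSpace 𝕜 Y] [CompleteSpace Y]
    {ι : D →L[𝕜] H} {C : ℝ → D →L[𝕜] Y} {a b L α : ℝ} (hab : a ≤ b) (hα : 0 < α)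
    (hι : Function.Injective ι)
    (hC : ∀ s ∈ Icc a b, ∀ t ∈ Icc a b, ∀ v : D, ‖C t v - C s v‖ ≤ L * |t - s| ^ α * ‖ι v‖)
    {u : ℝ → D} (hu : ContinuousOn (fun t => ι (u t)) (Icc a b)) :
    AEStronglyMeasurable (fun t => ‖C t (u t)‖ ^ 2) (volume.restrict (Icc a b)) := by
  -- composing with `projIcc` makes everything continuous on all of `ℝ`
  set p : ℝ → ℝ := fun t => projIcc a b hab t
  have hp : Continuous p := continuous_subtype_val.comp continuous_projIcc
  have hpI (t : ℝ) : p t ∈ Icc a b := (projIcc a b hab t).2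
  set V := u ∘ p
  have hV : Continuous (ι ∘ V) := hu.comp_continuous hp hpI
  set g : ℝ → Y := fun t => C (p t) (V t) - C a (V t)
  have hg : Continuous g :=
    (continuousOn_apply_sub_apply_of_holder hα hC (left_mem_Icc.2 hab) hu).comp_continuous hp hpI
  have hsplit (t : ℝ) : C (p t) (V t) = C a (V t) + g t := (add_sub_cancel _ _).symm
  have hsep : IsSeparable (range fun t => C (p t) (V t)) := by
    refine ((((isSeparable_range_of_continuous_comp hι hV).image (C a).continuous).prod
      (isSeparable_range hg)).image continuous_add).mono ?_
    rintro _ ⟨t, rfl⟩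
    exact ⟨(C a (V t), g t), ⟨mem_image_of_mem _ (mem_range_self t), mem_range_self t⟩,
      (hsplit t).symm⟩
  have hweak (z : Y) : Measurable fun t => RCLike.re ⟪z, C (p t) (V t)⟫_𝕜 := by
    simp_rw [hsplit, inner_add_right, map_add, ← ContinuousLinearMap.adjoint_inner_left (C a)]
    exact (RCLike.measurable_re.comp (measurable_inner_of_continuous_comp hι hV _)).add
      (RCLike.continuous_re.comp (continuous_const.inner hg)).measurable
  refine (measurable_norm_sq_of_measurable_re_inner hsep hweak).aestronglyMeasurable.congr
    (ae_restrict_of_forall_mem measurableSet_Icc fun t ht => ?_)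
  simp [p, V, projIcc_of_mem hab ht]

theorem averaged_observability_holder_observation_general
    {H Y D : Type*}
    [NormedAddCommGroup H] [InnerProductSpace ℂ H] [CompleteSpace H]
    [NormedAddCommGroup Y] [InnerProductSpace ℂ Y] [CompleteSpace Y]
    [NormedAddCommGroup D] [InnerProductSpace ℂ D] [CompleteSpace D]
    (τ : ℝ) (hτ : 0 < τ)
    (ι : D →L[ℂ] H) (hι_inj : Function.Injective ι)
    (A : ℝ → D →L[ℂ] H) (C : ℝ → D →L[ℂ] Y)
    (U : ℝ → ℝ → H →L[ℂ] H) (Ut : ℝ → ℝ → D →ₗ[ℂ] D)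
    -- ι ∘ Ũ(t,s) = U(t,s) ∘ ι
    (hcompat : ∀ t s : ℝ, ∀ v : D, ι (Ut t s v) = U t s (ι v))
    -- t ↦ U(t,s)(ι v) is differentiable with derivative −A(t)(Ũ(t,s)v)
    (hderiv_t : ∀ s ∈ Set.Icc (0:ℝ) τ, ∀ v : D, ∀ t ∈ Set.Icc s τ,
      HasDerivWithinAt (fun r => U r s (ι v)) (-(A t (Ut t s v))) (Set.Icc s τ) t)
    -- each U(t,0) is an isometry on H
    (hisom : ∀ t ∈ Set.Icc (0:ℝ) τ, ∀ x : H, ‖U t 0 x‖ = ‖x‖)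
    -- Hölder estimate on the observation family
    (L₀ α : ℝ) (hα : 0 < α)
    (hHolder : ∀ s ∈ Set.Icc (0:ℝ) τ, ∀ t ∈ Set.Icc (0:ℝ) τ, ∀ v : D,
      ‖C t v - C s v‖ ≤ L₀ * |t - s| ^ α * ‖ι v‖)
    -- the double-averaged observability estimate
    (κ : ℝ)
    (hdouble : ∀ x : D,
      κ * ‖ι x‖^2 ≤ ∫ t in (0:ℝ)..τ, ∫ s in (0:ℝ)..τ, ‖C s (Ut t 0 x)‖^2) :
    (∀ x : D,
      κ * ‖ι x‖^2 ≤
        (2 * L₀^2 * τ ^ (2*α + 2) / ((2*α + 1) * (α + 1))) * ‖ι x‖^2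
          + 2 * τ * ∫ t in (0:ℝ)..τ, ‖C t (Ut t 0 x)‖^2) ∧
    (2 * L₀^2 * τ ^ (2*α + 2) / ((2*α + 1) * (α + 1)) < κ →
      ∃ κ' > (0:ℝ), ∀ x : D,
        ∫ t in (0:ℝ)..τ, ‖C t (Ut t 0 x)‖^2 ≥ κ' * ‖ι x‖^2) := by
  set K := 2 * L₀^2 * τ ^ (2*α + 2) / ((2*α + 1) * (α + 1))
  have key (x : D) : κ * ‖ι x‖^2 ≤ K * ‖ι x‖^2 + 2 * τ * ∫ t in (0:ℝ)..τ, ‖C t (Ut t 0 x)‖^2 := by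
    have hu : ContinuousOn (fun t => ι (Ut t 0 x)) (Icc 0 τ) := fun t ht => by
      simpa only [hcompat] using (hderiv_t 0 ⟨le_rfl, hτ.le⟩ x t ht).continuousWithinAt
    have hdiff (t : ℝ) (ht : t ∈ Icc 0 τ) (s : ℝ) (hs : s ∈ Icc 0 τ) :
        |‖C s (Ut t 0 x)‖ - ‖C t (Ut t 0 x)‖| ≤ L₀ * ‖ι x‖ * |t - s| ^ α := by
      have h := hHolder t ht s hs (Ut t 0 x)
      rw [hcompat, hisom t ht, abs_sub_comm s t] at h
      exact (abs_norm_sub_norm_le _ _).trans (h.trans_eq (by ring))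
    calc κ * ‖ι x‖^2 ≤ ∫ t in (0:ℝ)..τ, ∫ s in (0:ℝ)..τ, ‖C s (Ut t 0 x)‖^2 := hdouble x
      _ ≤ 2 * (L₀ * ‖ι x‖) ^ 2 * (∫ t in (0:ℝ)..τ, ∫ s in (0:ℝ)..τ, |t - s| ^ (2 * α))
            + 2 * (τ - 0) * ∫ t in (0:ℝ)..τ, ‖C t (Ut t 0 x)‖^2 :=
        integral_integral_sq_le_of_abs_sub_le hτ hα.le hdiff
          (fun t _ => (continuousOn_apply_of_holder hα hHolder _).norm)
          (aestronglyMeasurable_norm_sq_apply_of_holder hτ.le hα hι_inj hHolder hu)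
      _ = K * ‖ι x‖^2 + 2 * τ * ∫ t in (0:ℝ)..τ, ‖C t (Ut t 0 x)‖^2 := by
        rw [integral_integral_abs_sub_rpow (by positivity) hτ.le, sub_zero]
        simp only [K]
        field_simp
  refine ⟨key, fun hK => ⟨(κ - K) / (2 * τ), div_pos (sub_pos.2 hK) (by positivity), fun x => ?_⟩⟩
  rw [ge_iff_le, div_mul_eq_mul_div, div_le_iff₀ (by positivity)]
  nlinarith [key x]

/-- Remark: Hölder-continuous observation families.

Suppose each `U t 0` is an isometry on `H`, the observation family satisfies the
Hölder estimate `‖C(t)v − C(s)v‖ ≤ L₀|t−s|^α ‖ι v‖`, and the double-averaged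
observability estimate `κ‖ι x‖² ≤ ∫₀^τ∫₀^τ ‖C(s)(Ũ(t,0)x)‖² ds dt` holds.
Then `κ‖ι x‖² ≤ (2L₀²τ^{2α+2}/((2α+1)(α+1)))‖ι x‖² + 2τ∫₀^τ ‖C(t)(Ũ(t,0)x)‖² dt`
for all `x ∈ D`; in particular, if `2L₀²τ^{2α+2}/((2α+1)(α+1)) < κ`, then the
system is exactly averaged observable in time `τ`. -/
theorem averaged_observability_holder_observation
    {H Y D : Type*}
    [NormedAddCommGroup H] [InnerProductSpace ℂ H] [CompleteSpace H]
    [NormedAddCommGroup Y] [InnerProductSpace ℂ Y] [CompleteSpace Y]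
    [NormedAddCommGroup D] [InnerProductSpace ℂ D] [CompleteSpace D]
    (τ : ℝ) (hτ : 0 < τ)
    (ι : D →L[ℂ] H) (hι_inj : Function.Injective ι) (hι_dense : DenseRange ι)
    (A : ℝ → D →L[ℂ] H) (C : ℝ → D →L[ℂ] Y)
    (U : ℝ → ℝ → H →L[ℂ] H) (Ut : ℝ → ℝ → D →ₗ[ℂ] D)
    -- ι ∘ Ũ(t,s) = U(t,s) ∘ ι
    (hcompat : ∀ t s : ℝ, ∀ v : D, ι (Ut t s v) = U t s (ι v))
    -- U(s,s) = I
    (hid : ∀ s : ℝ, U s s = ContinuousLinearMap.id ℂ H)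
    -- U(t,s) U(s,r) = U(t,r)
    (hcocycle : ∀ r s t : ℝ, 0 ≤ r → r ≤ s → s ≤ t → t ≤ τ →
      (U t s).comp (U s r) = U t r)
    -- t ↦ U(t,s)(ι v) is differentiable with derivative −A(t)(Ũ(t,s)v)
    (hderiv_t : ∀ s ∈ Set.Icc (0:ℝ) τ, ∀ v : D, ∀ t ∈ Set.Icc s τ,
      HasDerivWithinAt (fun r => U r s (ι v)) (-(A t (Ut t s v))) (Set.Icc s τ) t)
    -- each U(t,0) is an isometry on H
    (hisom : ∀ t ∈ Set.Icc (0:ℝ) τ, ∀ x : H, ‖U t 0 x‖ = ‖x‖)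
    -- Hölder estimate on the observation family
    (L₀ α : ℝ) (hL₀ : 0 < L₀) (hα : 0 < α)
    (hHolder : ∀ s ∈ Set.Icc (0:ℝ) τ, ∀ t ∈ Set.Icc (0:ℝ) τ, ∀ v : D,
      ‖C t v - C s v‖ ≤ L₀ * |t - s| ^ α * ‖ι v‖)
    -- the double-averaged observability estimate
    (κ : ℝ) (hκ : 0 < κ)
    (hdouble : ∀ x : D,
      κ * ‖ι x‖^2 ≤ ∫ t in (0:ℝ)..τ, ∫ s in (0:ℝ)..τ, ‖C s (Ut t 0 x)‖^2) :
    (∀ x : D,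
      κ * ‖ι x‖^2 ≤
        (2 * L₀^2 * τ ^ (2*α + 2) / ((2*α + 1) * (α + 1))) * ‖ι x‖^2
          + 2 * τ * ∫ t in (0:ℝ)..τ, ‖C t (Ut t 0 x)‖^2) ∧
    (2 * L₀^2 * τ ^ (2*α + 2) / ((2*α + 1) * (α + 1)) < κ →
      ∃ κ' > (0:ℝ), ∀ x : D,
        ∫ t in (0:ℝ)..τ, ‖C t (Ut t 0 x)‖^2 ≥ κ' * ‖ι x‖^2) :=
  averaged_observability_holder_observation_general τ hτ ι hι_inj A C U Ut hcompat hderiv_t hisom L₀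
    α hα hHolder κ hdouble
end

section
/- (Plancherel step of the averaged Hautus test.) Suppose the second averaged Hautus condition (AH.2) holds with constants m, M > 0: for all ξ ∈ ℝ and x ∈ D, ‖ι x‖²_H ≤ m²·(1/τ)·∫₀^τ ‖C(s)x‖²_Y ds + M²·(1/τ)·∫₀^τ ‖iξ·(ι x) + ι(A(s)x)‖²_H ds. Suppose moreover that for each v ∈ D the maps s ↦ C(s)v ∈ Y and s ↦ A(s)v ∈ H are continuous on [0,τ]. Let h : ℝ → D be continuous with compact support contained in the open interval (0,τ), such that ι ∘ h : ℝ → H is continuously differentiable. Set f(t,s) := (ι ∘ h)'(t) + ι(A(s)(h(t))). Then ∫₀^τ ‖ι(h(t))‖²_H dt ≤ (m²/τ)·∫₀^τ∫₀^τ ‖C(s)(h(t))‖²_Y dt ds + (M²/τ)·∫₀^τ∫₀^τ ‖f(t,s)‖²_H dt ds. -/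
/-!
Let `x n ∈ D` be the `n`-th Fourier coefficient of `h` on `[0, τ]` and `ξ n = 2πn/τ`. Since `h`
vanishes at both endpoints, integration by parts shows that the `n`-th coefficient of `h'` is
`(i ξ n) • ι (x n)`, and `C s`, `A s` commute with taking coefficients. Apply (AH.2) at
`(ξ n, x n)` and sum over `n`: by Parseval's identity the left side sums to `τ⁻¹ ∫ ‖ι h‖²`, and for
each `s` the right side to `τ⁻¹ ∫ ‖C s h‖²` and `τ⁻¹ ∫ ‖h' + A s h‖²`. The sum over `n` commutes
with the integral over `s` by monotone convergence; the limit is integrable because Banach–Steinhaus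
bounds `‖A s‖` and `‖C s‖` uniformly on `[0, τ]`.

Parseval's identity for a continuous Hilbert-space-valued function reduces to the scalar one by
expanding in a Hilbert basis of the closed span of its range: that span is separable, so the basis
is countable and the sums over basis vectors and over `n` may be interchanged with each other and
with the integral.
-/

open MeasureTheory Complex Set Filter Topology
open scoped Interval Real

theorem HasSum.comm_of_nonneg {β γ : Type*} {f : β → γ → ℝ} (hf : ∀ b g, 0 ≤ f b g) {r : β → ℝ}
    {c : γ → ℝ} {a : ℝ} (hr : ∀ b, HasSum (f b) (r b)) (hc : ∀ g, HasSum (f · g) (c g))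
    (ha : HasSum r a) : HasSum c a := by
  have hsum : Summable (Function.uncurry f) :=
    (summable_prod_of_nonneg fun p => hf p.1 p.2).2
      ⟨fun b => (hr b).summable, by simpa only [(hr _).tsum_eq] using ha.summable⟩
  have htot : HasSum (Function.uncurry f) a :=
    (hsum.hasSum.prod_fiberwise hr).unique ha ▸ hsum.hasSum
  exact ((Equiv.prodComm γ β).hasSum_iff.2 htot).prod_fiberwise hc

theorem Orthonormal.countable {𝕜 E ι : Type*} [RCLike 𝕜] [NormedAddCommGroup E]
    [InnerProductSpace 𝕜 E] [TopologicalSpace.SeparableSpace E] {v : ι → E}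
    (hv : Orthonormal 𝕜 v) : Countable ι := by
  refine Pairwise.countable_of_isOpen_disjoint (s := fun i => Metric.ball (v i) (1 / 2))
    (fun i j hij => Metric.ball_disjoint_ball ?_) (fun _ => Metric.isOpen_ball)
    (fun i => ⟨v i, Metric.mem_ball_self (by norm_num)⟩)
  have hdist : dist (v i) (v j) ^ 2 = 2 := by
    rw [dist_eq_norm, @norm_sub_sq 𝕜, hv.norm_eq_one, hv.norm_eq_one, hv.inner_eq_zero hij]
    norm_num
  nlinarith [dist_nonneg (x := v i) (y := v j)]

theorem HilbertBasis.hasSum_sq_norm_inner {𝕜 E ι : Type*} [RCLike 𝕜] [NormedAddCommGroup E]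
    [InnerProductSpace 𝕜 E] (b : HilbertBasis ι 𝕜 E) (x : E) :
    HasSum (fun i => ‖(inner 𝕜 (b i) x : 𝕜)‖ ^ 2) (‖x‖ ^ 2) := by
  simp_rw [← b.repr_apply_apply, ← b.repr.norm_map x]
  exact_mod_cast lp.hasSum_norm (p := 2) (by simp) (b.repr x)

theorem intervalIntegral.hasSum_integral_of_nonneg {ι : Type*} [Countable ι] {F : ι → ℝ → ℝ}
    {G : ℝ → ℝ} {a b : ℝ} (hF : ∀ n, IntervalIntegrable (F n) volume a b)
    (hF_nonneg : ∀ n, ∀ t ∈ Ι a b, 0 ≤ F n t) (hG : IntervalIntegrable G volume a b)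
    (hFG : ∀ t ∈ Ι a b, HasSum (F · t) (G t)) :
    HasSum (fun n => ∫ t in a..b, F n t) (∫ t in a..b, G t) := by
  refine intervalIntegral.hasSum_integral_of_dominated_convergence F
    (fun n => (hF n).def'.aestronglyMeasurable) (fun n => ae_of_all _ fun t ht => ?_)
    (ae_of_all _ fun t ht => (hFG t ht).summable) ?_ (ae_of_all _ hFG)
  · rw [Real.norm_of_nonneg (hF_nonneg n t ht)]
  · exact hG.congr fun t ht => ((hFG t ht).tsum_eq).symm

theorem continuous_fourier_coe (T : ℝ) (n : ℤ) :
    Continuous fun x : ℝ => fourier n (x : AddCircle T) :=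
  (map_continuous _).comp (AddCircle.continuous_mk' _)

section FourierCoeffOn

variable {E F : Type*} [NormedAddCommGroup E] [NormedSpace ℂ E] [NormedAddCommGroup F]
  [NormedSpace ℂ F] {a b : ℝ} (hab : a < b)

theorem fourierCoeffOn.add {f g : ℝ → E} (hf : IntervalIntegrable f volume a b)
    (hg : IntervalIntegrable g volume a b) (n : ℤ) :
    fourierCoeffOn hab (fun x => f x + g x) n =
      fourierCoeffOn hab f n + fourierCoeffOn hab g n := by
  have hc := continuous_fourier_coe (b - a) (-n)
  simp_rw [fourierCoeffOn_eq_integral, smul_add]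
  rw [intervalIntegral.integral_add (hf.continuousOn_smul hc.continuousOn)
    (hg.continuousOn_smul hc.continuousOn), smul_add]

theorem ContinuousLinearMap.fourierCoeffOn_comp [CompleteSpace E] [CompleteSpace F]
    (T : E →L[ℂ] F) {f : ℝ → E} (hf : IntervalIntegrable f volume a b) (n : ℤ) :
    fourierCoeffOn hab (fun x => T (f x)) n = T (fourierCoeffOn hab f n) := by
  have hc := continuous_fourier_coe (b - a) (-n)
  simp_rw [fourierCoeffOn_eq_integral, ← T.map_smul]
  rw [T.map_smul_of_tower, ← T.intervalIntegral_comp_comm (hf.continuousOn_smul hc.continuousOn)]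

theorem fourierCoeffOn_eq_smul_of_hasDerivAt [CompleteSpace E] {f f' : ℝ → E}
    (hf : ∀ x ∈ [[a, b]], HasDerivAt f (f' x) x) (hf' : IntervalIntegrable f' volume a b)
    (hfab : f a = f b) (n : ℤ) :
    fourierCoeffOn hab f' n = (2 * π * I * n / (b - a)) • fourierCoeffOn hab f n := by
  set e : ℝ → ℂ := fun x => fourier (-n) (x : AddCircle (b - a))
  have he : ∀ x, HasDerivAt e (-2 * π * I * n / (b - a) * e x) x := by
    rw [← ofReal_sub]
    exact hasDerivAt_fourier_neg (b - a) n
  have heab : e b = e a := by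
    simp only [e]
    congr 1
    simpa using AddCircle.coe_add_period (b - a) a
  have hparts := intervalIntegral.integral_smul_deriv_eq_deriv_smul (fun x _ => he x) hf
    ((continuous_const.mul (continuous_fourier_coe _ _)).intervalIntegrable _ _) hf'
  rw [heab, hfab, sub_self, zero_sub] at hparts
  simp_rw [fourierCoeffOn_eq_integral]
  change (1 / (b - a)) • ∫ x in a..b, e x • f' x = _ • (1 / (b - a)) • ∫ x in a..b, e x • f x
  simp_rw [hparts, mul_smul, intervalIntegral.integral_smul, smul_comm _ (1 / (b - a)), ← neg_smul]
  congr 2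
  ring

end FourierCoeffOn

section Parseval

variable {E : Type*} [NormedAddCommGroup E] [InnerProductSpace ℂ E] [CompleteSpace E]
  {a b : ℝ} (hab : a < b)

theorem hasSum_sq_fourierCoeffOn_of_separableSpace [TopologicalSpace.SeparableSpace E]
    {f : ℝ → E} (hf : Continuous f) :
    HasSum (fun n => ‖fourierCoeffOn hab f n‖ ^ 2) ((b - a)⁻¹ • ∫ x in a..b, ‖f x‖ ^ 2) := by
  obtain ⟨w, B, -⟩ := exists_hilbertBasis ℂ E
  have : Countable w := B.orthonormal.countable
  have hcoeff : ∀ i n, fourierCoeffOn hab (fun x => inner ℂ (B i) (f x)) n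
      = inner ℂ (B i) (fourierCoeffOn hab f n) :=
    fun i n => (innerSL ℂ (B i)).fourierCoeffOn_comp hab (hf.intervalIntegrable a b) n
  have hrow : ∀ i, HasSum (fun n => ‖inner ℂ (B i) (fourierCoeffOn hab f n)‖ ^ 2)
      ((b - a)⁻¹ • ∫ x in a..b, ‖inner ℂ (B i) (f x)‖ ^ 2) := by
    intro i
    have hφ : Continuous fun x => inner ℂ (B i) (f x) := continuous_const.inner hf
    simp_rw [← hcoeff]
    exact hasSum_sq_fourierCoeffOn hab ((memLp_two_iff_integrable_sq_norm
      hφ.aestronglyMeasurable).2 (hφ.norm.pow 2).integrableOn_Ioc)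
  have hcol : ∀ n, HasSum (fun i => ‖inner ℂ (B i) (fourierCoeffOn hab f n)‖ ^ 2)
      (‖fourierCoeffOn hab f n‖ ^ 2) :=
    fun n => B.hasSum_sq_norm_inner _
  have htot : HasSum (fun i => (b - a)⁻¹ • ∫ x in a..b, ‖inner ℂ (B i) (f x)‖ ^ 2)
      ((b - a)⁻¹ • ∫ x in a..b, ‖f x‖ ^ 2) :=
    (intervalIntegral.hasSum_integral_of_nonneg (F := fun i x => ‖inner ℂ (B i) (f x)‖ ^ 2)
      (fun i => ((continuous_const.inner hf).norm.pow 2).intervalIntegrable a b)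
      (fun _ _ _ => by positivity) ((hf.norm.pow 2).intervalIntegrable a b)
      (fun x _ => B.hasSum_sq_norm_inner (f x))).const_smul _
  exact HasSum.comm_of_nonneg (fun _ _ => by positivity) hrow hcol htot

theorem hasSum_sq_fourierCoeffOn_of_continuous {f : ℝ → E} (hf : Continuous f) :
    HasSum (fun n => ‖fourierCoeffOn hab f n‖ ^ 2) ((b - a)⁻¹ • ∫ x in a..b, ‖f x‖ ^ 2) := by
  set K : Submodule ℂ E := (Submodule.span ℂ (range f)).topologicalClosure
  have : CompleteSpace K := (Submodule.isClosed_topologicalClosure _).completeSpace_coe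
  have : TopologicalSpace.SeparableSpace K := by
    refine TopologicalSpace.IsSeparable.separableSpace ?_
    rw [Submodule.topologicalClosure_coe]
    exact (TopologicalSpace.isSeparable_range hf).span.closure
  have hfK : ∀ x, f x ∈ K := fun x =>
    Submodule.le_topologicalClosure _ (Submodule.subset_span ⟨x, rfl⟩)
  set g : ℝ → K := fun x => ⟨f x, hfK x⟩
  have hg : Continuous g := hf.subtype_mk hfK
  have hcoeff : ∀ n, fourierCoeffOn hab f n = fourierCoeffOn hab g n :=
    fun n => K.subtypeL.fourierCoeffOn_comp hab (hg.intervalIntegrable a b) n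
  simpa only [hcoeff, Submodule.coe_norm] using hasSum_sq_fourierCoeffOn_of_separableSpace hab hg

end Parseval

section StronglyContinuous

variable {X E F : Type*} [TopologicalSpace X] [NormedAddCommGroup E] [NormedSpace ℂ E]
  [CompleteSpace E] [NormedAddCommGroup F] [NormedSpace ℂ F] {S : Set X} {T : X → E →L[ℂ] F}

theorem IsCompact.exists_forall_opNorm_le (hS : IsCompact S)
    (hT : ∀ v, ContinuousOn (fun s => T s v) S) : ∃ R, ∀ s ∈ S, ‖T s‖ ≤ R := by
  obtain ⟨R, hR⟩ := banach_steinhaus (g := fun s : S => T s) fun v => by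
    obtain ⟨R, hR⟩ := hS.exists_bound_of_continuousOn (hT v)
    exact ⟨R, fun s => hR s s.2⟩
  exact ⟨R, fun s hs => hR ⟨s, hs⟩⟩

theorem IsCompact.continuousOn_intervalIntegral_norm_sq_add_apply [FirstCountableTopology X]
    (hS : IsCompact S) (hT : ∀ v, ContinuousOn (fun s => T s v) S) {u : ℝ → E}
    (hu : Continuous u) {w : ℝ → F} (hw : Continuous w) (a b : ℝ) :
    ContinuousOn (fun s => ∫ t in a..b, ‖w t + T s (u t)‖ ^ 2) S := by
  obtain ⟨R, hR⟩ := hS.exists_forall_opNorm_le hT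
  intro s₀ hs₀
  refine intervalIntegral.continuousWithinAt_of_dominated_interval
    (bound := fun t => (‖w t‖ + R * ‖u t‖) ^ 2)
    (Eventually.of_forall fun s =>
      ((hw.add ((T s).continuous.comp hu)).norm.pow 2).aestronglyMeasurable)
    ?_ (((hw.norm.add (continuous_const.mul hu.norm)).pow 2).intervalIntegrable a b)
    (ae_of_all _ fun t _ => (continuousWithinAt_const.add (hT (u t) s₀ hs₀)).norm.pow 2)
  filter_upwards [self_mem_nhdsWithin] with s hs
  refine ae_of_all _ fun t _ => ?_
  rw [Real.norm_of_nonneg (by positivity)]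
  gcongr
  calc ‖w t + T s (u t)‖ ≤ ‖w t‖ + ‖T s (u t)‖ := norm_add_le _ _
    _ ≤ ‖w t‖ + R * ‖u t‖ := by gcongr; exact (T s).le_of_opNorm_le (hR s hs) _

end StronglyContinuous

theorem hasSum_integral_sq_fourierCoeffOn_add_apply {E F : Type*} [NormedAddCommGroup E]
    [InnerProductSpace ℂ E] [CompleteSpace E] [NormedAddCommGroup F] [InnerProductSpace ℂ F]
    [CompleteSpace F] {a b c d : ℝ} (hab : a < b) (hcd : c ≤ d) {T : ℝ → E →L[ℂ] F}
    (hT : ∀ v, ContinuousOn (fun s => T s v) (Icc c d)) {u : ℝ → E} (hu : Continuous u)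
    {w : ℝ → F} (hw : Continuous w) :
    HasSum (fun n => ∫ s in c..d, ‖fourierCoeffOn hab w n + T s (fourierCoeffOn hab u n)‖ ^ 2)
      (∫ s in c..d, (b - a)⁻¹ * ∫ t in a..b, ‖w t + T s (u t)‖ ^ 2) := by
  refine intervalIntegral.hasSum_integral_of_nonneg
    (fun n => ((continuousOn_const.add (hT _)).norm.pow 2).intervalIntegrable_of_Icc hcd)
    (fun _ _ _ => by positivity)
    ((continuousOn_const.mul (isCompact_Icc.continuousOn_intervalIntegral_norm_sq_add_apply hT hu
      hw a b)).intervalIntegrable_of_Icc hcd) (fun s _ => ?_)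
  have hTu : Continuous fun t => T s (u t) := by fun_prop
  simpa only [fourierCoeffOn.add hab (hw.intervalIntegrable a b) (hTu.intervalIntegrable a b),
    (T s).fourierCoeffOn_comp hab (hu.intervalIntegrable a b), smul_eq_mul] using
    hasSum_sq_fourierCoeffOn_of_continuous hab (f := fun t => w t + T s (u t)) (hw.add hTu)

theorem averaged_hautus_plancherel_step_general
    {H Y D : Type*}
    [NormedAddCommGroup H] [InnerProductSpace ℂ H] [CompleteSpace H]
    [NormedAddCommGroup Y] [InnerProductSpace ℂ Y] [CompleteSpace Y]
    [NormedAddCommGroup D] [InnerProductSpace ℂ D] [CompleteSpace D]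
    (τ : ℝ) (hτ : 0 < τ)
    (ι : D →L[ℂ] H)
    (A : ℝ → D →L[ℂ] H) (C : ℝ → D →L[ℂ] Y)
    (m M : ℝ)
    -- the second averaged Hautus condition (AH.2)
    (hAH2 : ∀ (ξ : ℝ) (x : D),
      ‖ι x‖^2 ≤ m^2 * ((1/τ) * ∫ s in (0:ℝ)..τ, ‖C s x‖^2)
        + M^2 * ((1/τ) * ∫ s in (0:ℝ)..τ, ‖(Complex.I * (ξ:ℂ)) • (ι x) + A s x‖^2))
    -- continuity of s ↦ C(s)v and s ↦ A(s)v on [0,τ]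
    (hCcont : ∀ v : D, ContinuousOn (fun s => C s v) (Set.Icc (0:ℝ) τ))
    (hAcont : ∀ v : D, ContinuousOn (fun s => A s v) (Set.Icc (0:ℝ) τ))
    -- h : ℝ → D continuous with compact support contained in (0,τ)
    (h : ℝ → D) (hh_cont : Continuous h)
    (hh_in : tsupport h ⊆ Set.Ioo (0:ℝ) τ)
    -- ι ∘ h is continuously differentiable with derivative h'
    (h' : ℝ → H) (hh'_cont : Continuous h')
    (hh'_deriv : ∀ t : ℝ, HasDerivAt (fun r => ι (h r)) (h' t) t) :
    ∫ t in (0:ℝ)..τ, ‖ι (h t)‖^2 ≤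
      (m^2 / τ) * (∫ s in (0:ℝ)..τ, ∫ t in (0:ℝ)..τ, ‖C s (h t)‖^2)
        + (M^2 / τ) * (∫ s in (0:ℝ)..τ, ∫ t in (0:ℝ)..τ, ‖h' t + A s (h t)‖^2) := by
  set x : ℤ → D := fourierCoeffOn hτ h
  set ξ : ℤ → ℝ := fun n => 2 * π * n / τ
  have hh_int := hh_cont.intervalIntegrable (μ := volume) 0 τ
  have hh_ends : h 0 = h τ := by
    rw [image_eq_zero_of_notMem_tsupport fun h0 => (hh_in h0).1.false,
      image_eq_zero_of_notMem_tsupport fun hτ => (hh_in hτ).2.false]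
  have hcoeff_deriv : ∀ n, fourierCoeffOn hτ h' n = (I * ξ n) • ι (x n) := by
    intro n
    rw [fourierCoeffOn_eq_smul_of_hasDerivAt hτ (fun t _ => hh'_deriv t)
      (hh'_cont.intervalIntegrable 0 τ) (by rw [hh_ends]) n, ι.fourierCoeffOn_comp hτ hh_int]
    congr 1
    simp only [ξ]
    push_cast
    ring
  have hleft : HasSum (fun n => ‖ι (x n)‖ ^ 2) (τ⁻¹ * ∫ t in (0:ℝ)..τ, ‖ι (h t)‖ ^ 2) := by
    simpa only [ι.fourierCoeffOn_comp hτ hh_int, sub_zero, smul_eq_mul] using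
      hasSum_sq_fourierCoeffOn_of_continuous hτ (f := fun t => ι (h t)) (by fun_prop)
  have hC : HasSum (fun n => ∫ s in (0:ℝ)..τ, ‖C s (x n)‖ ^ 2)
      (∫ s in (0:ℝ)..τ, τ⁻¹ * ∫ t in (0:ℝ)..τ, ‖C s (h t)‖ ^ 2) := by
    have hzero : ∀ n, fourierCoeffOn hτ (fun _ => (0 : Y)) n = 0 := fun n => by
      simp [fourierCoeffOn_eq_integral]
    simpa only [hzero, zero_add, sub_zero] using hasSum_integral_sq_fourierCoeffOn_add_apply hτ
      hτ.le hCcont hh_cont (continuous_const (y := (0 : Y)))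
  have hA : HasSum (fun n => ∫ s in (0:ℝ)..τ, ‖(I * ξ n) • ι (x n) + A s (x n)‖ ^ 2)
      (∫ s in (0:ℝ)..τ, τ⁻¹ * ∫ t in (0:ℝ)..τ, ‖h' t + A s (h t)‖ ^ 2) := by
    simpa only [hcoeff_deriv, sub_zero] using
      hasSum_integral_sq_fourierCoeffOn_add_apply hτ hτ.le hAcont hh_cont hh'_cont
  simp only [one_div] at hAH2
  have hsum := hasSum_le (fun n => hAH2 (ξ n) (x n)) hleft
    (((hC.mul_left τ⁻¹).mul_left (m ^ 2)).add ((hA.mul_left τ⁻¹).mul_left (M ^ 2)))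
  rw [intervalIntegral.integral_const_mul, intervalIntegral.integral_const_mul] at hsum
  refine (mul_le_mul_iff_right₀ (inv_pos.2 hτ)).1 (hsum.trans_eq ?_)
  ring

/-- Plancherel step of the averaged Hautus test.

Suppose the second averaged Hautus condition (AH.2) holds with constants
`m, M > 0`, and for each `v ∈ D` the maps `s ↦ C(s)v` and `s ↦ A(s)v` are
continuous on `[0,τ]`.  Let `h : ℝ → D` be continuous with compact support
contained in `(0,τ)` such that `ι ∘ h` is continuously differentiable with
derivative `h'`.  With `f(t,s) := (ι ∘ h)'(t) + A(s)(h(t))` one has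
`∫₀^τ ‖ι(h(t))‖² dt ≤ (m²/τ)·∫₀^τ∫₀^τ ‖C(s)(h(t))‖² dt ds
                    + (M²/τ)·∫₀^τ∫₀^τ ‖f(t,s)‖² dt ds`. -/
theorem averaged_hautus_plancherel_step
    {H Y D : Type*}
    [NormedAddCommGroup H] [InnerProductSpace ℂ H] [CompleteSpace H]
    [NormedAddCommGroup Y] [InnerProductSpace ℂ Y] [CompleteSpace Y]
    [NormedAddCommGroup D] [InnerProductSpace ℂ D] [CompleteSpace D]
    (τ : ℝ) (hτ : 0 < τ)
    (ι : D →L[ℂ] H) (hι_inj : Function.Injective ι) (hι_dense : DenseRange ι)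
    (A : ℝ → D →L[ℂ] H) (C : ℝ → D →L[ℂ] Y)
    (m M : ℝ) (hm : 0 < m) (hM : 0 < M)
    -- the second averaged Hautus condition (AH.2)
    (hAH2 : ∀ (ξ : ℝ) (x : D),
      ‖ι x‖^2 ≤ m^2 * ((1/τ) * ∫ s in (0:ℝ)..τ, ‖C s x‖^2)
        + M^2 * ((1/τ) * ∫ s in (0:ℝ)..τ, ‖(Complex.I * (ξ:ℂ)) • (ι x) + A s x‖^2))
    -- continuity of s ↦ C(s)v and s ↦ A(s)v on [0,τ]
    (hCcont : ∀ v : D, ContinuousOn (fun s => C s v) (Set.Icc (0:ℝ) τ))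
    (hAcont : ∀ v : D, ContinuousOn (fun s => A s v) (Set.Icc (0:ℝ) τ))
    -- h : ℝ → D continuous with compact support contained in (0,τ)
    (h : ℝ → D) (hh_cont : Continuous h) (hh_supp : HasCompactSupport h)
    (hh_in : tsupport h ⊆ Set.Ioo (0:ℝ) τ)
    -- ι ∘ h is continuously differentiable with derivative h'
    (h' : ℝ → H) (hh'_cont : Continuous h')
    (hh'_deriv : ∀ t : ℝ, HasDerivAt (fun r => ι (h r)) (h' t) t) :
    ∫ t in (0:ℝ)..τ, ‖ι (h t)‖^2 ≤
      (m^2 / τ) * (∫ s in (0:ℝ)..τ, ∫ t in (0:ℝ)..τ, ‖C s (h t)‖^2)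
        + (M^2 / τ) * (∫ s in (0:ℝ)..τ, ∫ t in (0:ℝ)..τ, ‖h' t + A s (h t)‖^2) :=
  averaged_hautus_plancherel_step_general τ hτ ι A C m M hAH2 hCcont hAcont h hh_cont hh_in h'
    hh'_cont hh'_deriv
end

section
/- (Quasi-contractivity of perturbed evolution families.) Let U(t,s), Ũ(t,s) be an evolution family for the equation x'(t) = A(t)x(t) (i.e. for every v ∈ D, t ↦ U(t,s)(ι v) is differentiable in H with derivative +ι(A(t)(Ũ(t,s)v))). Suppose there is β ≥ 0 such that |Re⟨ι(A(t)v), ι v⟩_H| ≤ β·‖ι v‖²_H for all t ∈ [0,τ] and v ∈ D. Then for all 0 ≤ s ≤ t ≤ τ and all v ∈ D: e^{−β(t−s)}·‖ι v‖_H ≤ ‖U(t,s)(ι v)‖_H ≤ e^{β(t−s)}·‖ι v‖_H. -/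
/-!
Along the trajectory `x r = U(r,s)(ι v)` the squared norm has derivative
`2 Re⟪A(r) Ũ(r,s) v, x r⟫`, which the quasi-dissipativity bound controls by `± 2β‖x r‖²`.
So `e^{-2βr}‖x r‖²` is antitone and `e^{2βr}‖x r‖²` is monotone, and taking square roots gives
both bounds.
-/

open Set Real
open scoped InnerProductSpace

lemma antitoneOn_exp_neg_mul_of_deriv_le_mul {f f' : ℝ → ℝ} {a b c : ℝ}
    (hf : ∀ r ∈ Icc a b, HasDerivWithinAt f (f' r) (Icc a b) r)
    (hf' : ∀ r ∈ Icc a b, f' r ≤ c * f r) :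
    AntitoneOn (fun r => exp (-c * r) * f r) (Icc a b) := by
  have hg : ∀ r ∈ Icc a b, HasDerivWithinAt (fun r => exp (-c * r) * f r)
      (exp (-c * r) * (f' r - c * f r)) (Icc a b) r := by
    intro r hr
    have hexp : HasDerivAt (fun r => exp (-c * r)) (exp (-c * r) * -c) r := by
      simpa using ((hasDerivAt_id r).const_mul (-c)).exp
    exact (hexp.hasDerivWithinAt.mul (hf r hr)).congr_deriv (by ring)
  refine antitoneOn_of_hasDerivWithinAt_nonpos (f' := fun r => exp (-c * r) * (f' r - c * f r))
    (convex_Icc a b) (fun r hr => (hg r hr).continuousWithinAt) (fun r hr => ?_) (fun r hr => ?_)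
  · rw [interior_Icc] at hr ⊢
    exact (hg r (Ioo_subset_Icc_self hr)).mono Ioo_subset_Icc_self
  · rw [interior_Icc] at hr
    exact mul_nonpos_of_nonneg_of_nonpos (exp_pos _).le
      (sub_nonpos.mpr (hf' r (Ioo_subset_Icc_self hr)))

lemma le_exp_mul_of_deriv_le_mul {f f' : ℝ → ℝ} {a b c t : ℝ}
    (hf : ∀ r ∈ Icc a b, HasDerivWithinAt f (f' r) (Icc a b) r)
    (hf' : ∀ r ∈ Icc a b, f' r ≤ c * f r) (ht : t ∈ Icc a b) :
    f t ≤ exp (c * (t - a)) * f a := by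
  have hmono : exp (-c * t) * f t ≤ exp (-c * a) * f a :=
    antitoneOn_exp_neg_mul_of_deriv_le_mul hf hf' (left_mem_Icc.mpr (ht.1.trans ht.2)) ht ht.1
  calc f t = exp (c * t) * (exp (-c * t) * f t) := by
        rw [← mul_assoc, ← exp_add]; simp
    _ ≤ exp (c * t) * (exp (-c * a) * f a) := by gcongr
    _ = exp (c * (t - a)) * f a := by rw [← mul_assoc, ← exp_add]; ring_nf

lemma exp_neg_mul_le_of_neg_mul_le_deriv {f f' : ℝ → ℝ} {a b c t : ℝ}
    (hf : ∀ r ∈ Icc a b, HasDerivWithinAt f (f' r) (Icc a b) r)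
    (hf' : ∀ r ∈ Icc a b, -(c * f r) ≤ f' r) (ht : t ∈ Icc a b) :
    exp (-c * (t - a)) * f a ≤ f t := by
  have := le_exp_mul_of_deriv_le_mul (f := fun r => -f r) (f' := fun r => -f' r) (c := -c)
    (fun r hr => (hf r hr).neg) (fun r hr => by linarith [hf' r hr]) ht
  simpa [neg_mul] using this

section InnerProductSpace

variable {𝕜 E : Type*} [RCLike 𝕜] [NormedAddCommGroup E] [InnerProductSpace 𝕜 E]
  [NormedSpace ℝ E]

theorem HasDerivWithinAt.norm_sq_of_rclike {x : ℝ → E} {x' : E} {s : Set ℝ} {r : ℝ}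
    (hx : HasDerivWithinAt x x' s r) :
    HasDerivWithinAt (‖x ·‖ ^ 2) (2 * RCLike.re ⟪x', x r⟫_𝕜) s r := by
  have h := RCLike.reCLM.hasFDerivAt.comp_hasDerivWithinAt r (hx.inner 𝕜 hx)
  have hfun : (RCLike.reCLM ∘ fun t => ⟪x t, x t⟫_𝕜) = (‖x ·‖ ^ 2) := by
    funext t
    simp only [Function.comp_apply, RCLike.reCLM_apply, inner_self_eq_norm_sq]
  rw [hfun] at h
  refine h.congr_deriv ?_
  rw [RCLike.reCLM_apply, map_add, inner_re_symm (x r)]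
  ring

theorem exp_neg_mul_norm_le_norm_and_norm_le_exp_mul_norm {x x' : ℝ → E} {a b β t : ℝ}
    (hx : ∀ r ∈ Icc a b, HasDerivWithinAt x (x' r) (Icc a b) r)
    (hβ : ∀ r ∈ Icc a b, |RCLike.re ⟪x' r, x r⟫_𝕜| ≤ β * ‖x r‖ ^ 2) (ht : t ∈ Icc a b) :
    exp (-β * (t - a)) * ‖x a‖ ≤ ‖x t‖ ∧ ‖x t‖ ≤ exp (β * (t - a)) * ‖x a‖ := by
  have hsq_deriv := fun r hr => (hx r hr).norm_sq_of_rclike (𝕜 := 𝕜)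
  have hsq_deriv_le : ∀ r ∈ Icc a b, |2 * RCLike.re ⟪x' r, x r⟫_𝕜| ≤ 2 * β * ‖x r‖ ^ 2 := by
    intro r hr
    rw [abs_mul, abs_two, mul_assoc]
    gcongr
    exact hβ r hr
  have hlow := exp_neg_mul_le_of_neg_mul_le_deriv hsq_deriv
    (fun r hr => (abs_le.mp (hsq_deriv_le r hr)).1) ht
  have hup := le_exp_mul_of_deriv_le_mul hsq_deriv
    (fun r hr => (abs_le.mp (hsq_deriv_le r hr)).2) ht
  constructor
  · rw [← pow_le_pow_iff_left₀ (by positivity) (norm_nonneg _) two_ne_zero]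
    calc (exp (-β * (t - a)) * ‖x a‖) ^ 2 = exp (-(2 * β) * (t - a)) * ‖x a‖ ^ 2 := by
          rw [mul_pow, ← exp_nat_mul]; ring_nf
      _ ≤ ‖x t‖ ^ 2 := hlow
  · rw [← pow_le_pow_iff_left₀ (norm_nonneg _) (by positivity) two_ne_zero]
    calc ‖x t‖ ^ 2 ≤ exp (2 * β * (t - a)) * ‖x a‖ ^ 2 := hup
      _ = (exp (β * (t - a)) * ‖x a‖) ^ 2 := by rw [mul_pow, ← exp_nat_mul]; ring_nf

end InnerProductSpace

theorem quasi_contractivity_of_perturbed_evolution_family_general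
    {H D : Type*}
    [NormedAddCommGroup H] [InnerProductSpace ℂ H]
    [NormedAddCommGroup D] [InnerProductSpace ℂ D]
    (τ : ℝ)
    (ι : D →L[ℂ] H)
    (A : ℝ → D →L[ℂ] H)
    (U : ℝ → ℝ → H →L[ℂ] H) (Ut : ℝ → ℝ → D →ₗ[ℂ] D)
    -- ι ∘ Ũ(t,s) = U(t,s) ∘ ι
    (hcompat : ∀ t s : ℝ, ∀ v : D, ι (Ut t s v) = U t s (ι v))
    -- U(s,s) = I
    (hid : ∀ s : ℝ, U s s = ContinuousLinearMap.id ℂ H)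
    -- t ↦ U(t,s)(ι v) is differentiable with derivative +A(t)(Ũ(t,s)v)
    (hderiv_t : ∀ s ∈ Set.Icc (0:ℝ) τ, ∀ v : D, ∀ t ∈ Set.Icc s τ,
      HasDerivWithinAt (fun r => U r s (ι v)) (A t (Ut t s v)) (Set.Icc s τ) t)
    -- the quasi-dissipativity bound
    (β : ℝ)
    (hquasi : ∀ t ∈ Set.Icc (0:ℝ) τ, ∀ v : D,
      |(inner ℂ (A t v) (ι v) : ℂ).re| ≤ β * ‖ι v‖^2) :
    ∀ s t : ℝ, 0 ≤ s → s ≤ t → t ≤ τ → ∀ v : D,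
      Real.exp (-β * (t - s)) * ‖ι v‖ ≤ ‖U t s (ι v)‖ ∧
      ‖U t s (ι v)‖ ≤ Real.exp (β * (t - s)) * ‖ι v‖ := by
  intro s t hs hst htτ v
  have hbound : ∀ r ∈ Icc s τ,
      |RCLike.re ⟪A r (Ut r s v), U r s (ι v)⟫_ℂ| ≤ β * ‖U r s (ι v)‖ ^ 2 := by
    intro r hr
    rw [← hcompat]
    exact hquasi r ⟨hs.trans hr.1, hr.2⟩ (Ut r s v)
  simpa [hid] using exp_neg_mul_norm_le_norm_and_norm_le_exp_mul_norm
    (hderiv_t s ⟨hs, hst.trans htτ⟩ v) hbound ⟨hst, htτ⟩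

/-- Quasi-contractivity of perturbed evolution families.

Let `(U, Ut)` be an evolution family for `x'(t) = A(t)x(t)` (the derivative of
`t ↦ U(t,s)(ι v)` is `+A(t)(Ũ(t,s)v)`), and suppose there is `β ≥ 0` with
`|Re⟪A(t)v, ι v⟫| ≤ β‖ι v‖²` for all `t ∈ [0,τ]` and `v ∈ D`.  Then
`e^{−β(t−s)}‖ι v‖ ≤ ‖U(t,s)(ι v)‖ ≤ e^{β(t−s)}‖ι v‖`
for all `0 ≤ s ≤ t ≤ τ` and `v ∈ D`. -/
theorem quasi_contractivity_of_perturbed_evolution_family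
    {H D : Type*}
    [NormedAddCommGroup H] [InnerProductSpace ℂ H] [CompleteSpace H]
    [NormedAddCommGroup D] [InnerProductSpace ℂ D] [CompleteSpace D]
    (τ : ℝ) (hτ : 0 < τ)
    (ι : D →L[ℂ] H) (hι_inj : Function.Injective ι) (hι_dense : DenseRange ι)
    (A : ℝ → D →L[ℂ] H)
    (U : ℝ → ℝ → H →L[ℂ] H) (Ut : ℝ → ℝ → D →ₗ[ℂ] D)
    -- ι ∘ Ũ(t,s) = U(t,s) ∘ ι
    (hcompat : ∀ t s : ℝ, ∀ v : D, ι (Ut t s v) = U t s (ι v))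
    -- U(s,s) = I
    (hid : ∀ s : ℝ, U s s = ContinuousLinearMap.id ℂ H)
    -- U(t,s) U(s,r) = U(t,r)
    (hcocycle : ∀ r s t : ℝ, 0 ≤ r → r ≤ s → s ≤ t → t ≤ τ →
      (U t s).comp (U s r) = U t r)
    -- t ↦ U(t,s)(ι v) is differentiable with derivative +A(t)(Ũ(t,s)v)
    (hderiv_t : ∀ s ∈ Set.Icc (0:ℝ) τ, ∀ v : D, ∀ t ∈ Set.Icc s τ,
      HasDerivWithinAt (fun r => U r s (ι v)) (A t (Ut t s v)) (Set.Icc s τ) t)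
    -- the quasi-dissipativity bound
    (β : ℝ) (hβ : 0 ≤ β)
    (hquasi : ∀ t ∈ Set.Icc (0:ℝ) τ, ∀ v : D,
      |(inner ℂ (A t v) (ι v) : ℂ).re| ≤ β * ‖ι v‖^2) :
    ∀ s t : ℝ, 0 ≤ s → s ≤ t → t ≤ τ → ∀ v : D,
      Real.exp (-β * (t - s)) * ‖ι v‖ ≤ ‖U t s (ι v)‖ ∧
      ‖U t s (ι v)‖ ≤ Real.exp (β * (t - s)) * ‖ι v‖ :=
  quasi_contractivity_of_perturbed_evolution_family_general τ ι A U Ut hcompat hid hderiv_t β hquasi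
end
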